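/- The map ρ((g, h; h̄, ḡ), Z) = (gZ + h)(h̄Z + ḡ)⁻¹ defines an action of the restricted symplectic group Sp_res(V,Ω) on the restricted Siegel disc D_res(H): for each group element and each Z ∈ D_res(H), the image W := (gZ + h)(h̄Z + ḡ)⁻¹ again satisfies W ∈ L²(H₋,H₊), Wᵀ = W, and id − W*W ≻ 0, and ρ satisfies the action axioms. -/

import Mathlib

/- Setting: `H = H₊ ⊕ H₋` is a separable complex Hilbert space. We model the two summands
as complex Hilbert spaces `Hp`, `Hm` and operators on `H` by their four blocks, or work on a
single Hilbert space `H` with orthogonal projections `p₊, p₋`. The antilinear conjugation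
exchanging `H₊` and `H₋` is modeled as a conjugate-linear isometric equivalence
`c : Hp ≃ₛₗᵢ[starRingEnd ℂ] Hm`. -/

noncomputable section
open ContinuousLinearMap Complex
open scoped InnerProductSpace ComplexOrder

instance : RingHomCompTriple (starRingEnd ℂ) (starRingEnd ℂ) (RingHom.id ℂ) :=
  ⟨RingHom.ext fun z => Complex.conj_conj z⟩

/-- A bounded operator between complex Hilbert spaces is Hilbert–Schmidt if for every
Hilbert basis, the sum of the squared norms of the images of the basis vectors is finite. -/
def IsHS {E F : Type} [NormedAddCommGroup E] [InnerProductSpace ℂ E]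
    [NormedAddCommGroup F] [InnerProductSpace ℂ F] (T : E →L[ℂ] F) : Prop :=
  ∀ b : HilbertBasis ℕ ℂ E, Summable fun i => ‖T (b i)‖ ^ 2

/-- The conjugate `T̄` (defined by `T̄ u = conj (T ū)`) of an operator, with respect to
antilinear conjugations `cA`, `cB` on the domain and codomain. -/
def opBar {A A' B B' : Type} [NormedAddCommGroup A] [InnerProductSpace ℂ A]
    [NormedAddCommGroup A'] [InnerProductSpace ℂ A']
    [NormedAddCommGroup B] [InnerProductSpace ℂ B]
    [NormedAddCommGroup B'] [InnerProductSpace ℂ B']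
    (cA : A ≃ₛₗᵢ[starRingEnd ℂ] A') (cB : B ≃ₛₗᵢ[starRingEnd ℂ] B')
    (T : A →L[ℂ] B) : A' →L[ℂ] B' :=
  cB.toLinearIsometry.toContinuousLinearMap.comp
    (T.comp cA.symm.toLinearIsometry.toContinuousLinearMap)

/-- Fredholm operator: finite-dimensional kernel and cokernel. -/
def IsFredholm {E F : Type} [NormedAddCommGroup E] [NormedSpace ℂ E]
    [NormedAddCommGroup F] [NormedSpace ℂ F] (T : E →L[ℂ] F) : Prop :=
  FiniteDimensional ℂ (LinearMap.ker (T : E →ₗ[ℂ] F)) ∧ FiniteDimensional ℂ (F ⧸ LinearMap.range (T : E →ₗ[ℂ] F))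

/-- Fredholm index `Ind T = dim ker T − codim range T`. -/
def fredholmIndex {E F : Type} [NormedAddCommGroup E] [NormedSpace ℂ E]
    [NormedAddCommGroup F] [NormedSpace ℂ F] (T : E →L[ℂ] F) : ℤ :=
  (Module.finrank ℂ (LinearMap.ker (T : E →ₗ[ℂ] F)) : ℤ) - Module.finrank ℂ (F ⧸ LinearMap.range (T : E →ₗ[ℂ] F))

variable {Hp Hm : Type} [NormedAddCommGroup Hp] [InnerProductSpace ℂ Hp] [CompleteSpace Hp]
  [NormedAddCommGroup Hm] [InnerProductSpace ℂ Hm] [CompleteSpace Hm]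

/-- `Zᵀ := (Z̄)*` for `Z : H₋ → H₊`. -/
def opTrans (c : Hp ≃ₛₗᵢ[starRingEnd ℂ] Hm) (Z : Hm →L[ℂ] Hp) : Hm →L[ℂ] Hp :=
  adjoint (opBar c.symm c Z)

/-- `ḡ : H₋ → H₋` for `g : H₊ → H₊`. -/
def barP (c : Hp ≃ₛₗᵢ[starRingEnd ℂ] Hm) (g : Hp →L[ℂ] Hp) : Hm →L[ℂ] Hm :=
  opBar c c g

/-- `h̄ : H₊ → H₋` for `h : H₋ → H₊`. -/
def barM (c : Hp ≃ₛₗᵢ[starRingEnd ℂ] Hm) (h : Hm →L[ℂ] Hp) : Hp →L[ℂ] Hm :=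
  opBar c.symm c h

/-- `gᵀ := (ḡ)* : H₋ → H₋` for `g : H₊ → H₊`. -/
def transP (c : Hp ≃ₛₗᵢ[starRingEnd ℂ] Hm) (g : Hp →L[ℂ] Hp) : Hm →L[ℂ] Hm :=
  adjoint (barP c g)

/-- The conditions on the blocks `(g, h; h̄, ḡ)` characterizing elements of `Sp(V,Ω)`:
`g*g − hᵀh̄ = id`, `g*h = hᵀḡ`, `gg* − hh* = id`, `ghᵀ = hgᵀ`. -/
def SympBlocks (c : Hp ≃ₛₗᵢ[starRingEnd ℂ] Hm) (g : Hp →L[ℂ] Hp) (h : Hm →L[ℂ] Hp) : Prop :=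
  (adjoint g) ∘L g - (opTrans c h) ∘L (barM c h) = 1 ∧
  (adjoint g) ∘L h = (opTrans c h) ∘L (barP c g) ∧
  g ∘L (adjoint g) - h ∘L (adjoint h) = 1 ∧
  g ∘L (opTrans c h) = h ∘L (transP c g)

/-- Membership in the restricted Siegel disc:
`Z` Hilbert–Schmidt, `Zᵀ = Z`, and `id − Z*Z ≻ 0`. -/
def InDres (c : Hp ≃ₛₗᵢ[starRingEnd ℂ] Hm) (Z : Hm →L[ℂ] Hp) : Prop :=
  IsHS Z ∧ opTrans c Z = Z ∧
    ∀ u : Hm, u ≠ 0 → 0 < ⟪u, (1 - (adjoint Z) ∘L Z) u⟫_ℂ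

/-- The action `ρ((g,h;h̄,ḡ), Z) = (gZ + h)(h̄Z + ḡ)⁻¹`. -/
def rho (c : Hp ≃ₛₗᵢ[starRingEnd ℂ] Hm) (g : Hp →L[ℂ] Hp) (h : Hm →L[ℂ] Hp)
    (Z : Hm →L[ℂ] Hp) : Hm →L[ℂ] Hp :=
  (g ∘L Z + h) ∘L Ring.inverse ((barM c h) ∘L Z + (barP c g))


section AuxConj
variable {E E' F F' G G' : Type}
  [NormedAddCommGroup E] [InnerProductSpace ℂ E]
  [NormedAddCommGroup E'] [InnerProductSpace ℂ E']
  [NormedAddCommGroup F] [InnerProductSpace ℂ F]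
  [NormedAddCommGroup F'] [InnerProductSpace ℂ F']
  [NormedAddCommGroup G] [InnerProductSpace ℂ G]
  [NormedAddCommGroup G'] [InnerProductSpace ℂ G']

lemma conj_inner_map (c : E ≃ₛₗᵢ[starRingEnd ℂ] E') (x y : E) :
    ⟪c x, c y⟫_ℂ = (starRingEnd ℂ) ⟪x, y⟫_ℂ := by
  have hre : ∀ a b : E, (⟪c a, c b⟫_ℂ).re = (⟪a, b⟫_ℂ).re := by
    intro a b
    have h1 := norm_add_sq (𝕜 := ℂ) a b
    have h2 := norm_add_sq (𝕜 := ℂ) (c a) (c b)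
    rw [← map_add, c.norm_map, c.norm_map, c.norm_map] at h2
    simp only [RCLike.re_to_complex] at h1 h2
    linarith
  have hsm : ∀ b : E, Complex.I • c b = c ((-Complex.I) • b) := by
    intro b
    rw [LinearIsometryEquiv.map_smulₛₗ]
    simp
  apply Complex.ext
  · exact hre x y
  · have h1 := hre x ((-Complex.I) • y)
    rw [← hsm, inner_smul_right, inner_smul_right] at h1
    simp only [Complex.mul_re, Complex.I_re, Complex.I_im, Complex.neg_re, Complex.neg_im] at h1 ⊢
    simp only [Complex.conj_im, Complex.conj_re]
    linarith

lemma conj_inner_left (c : E ≃ₛₗᵢ[starRingEnd ℂ] E') (x : E) (y : E') :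
    ⟪c x, y⟫_ℂ = ⟪c.symm y, x⟫_ℂ := by
  have h := conj_inner_map c x (c.symm y)
  rw [c.apply_symm_apply] at h
  rw [h, ← inner_conj_symm]
  simp

@[simp] lemma opBar_apply (cA : E ≃ₛₗᵢ[starRingEnd ℂ] E') (cB : F ≃ₛₗᵢ[starRingEnd ℂ] F')
    (T : E →L[ℂ] F) (x : E') : opBar cA cB T x = cB (T (cA.symm x)) := rfl

lemma opBar_add (cA : E ≃ₛₗᵢ[starRingEnd ℂ] E') (cB : F ≃ₛₗᵢ[starRingEnd ℂ] F')
    (T S : E →L[ℂ] F) : opBar cA cB (T + S) = opBar cA cB T + opBar cA cB S := by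
  ext x; simp

lemma opBar_sub (cA : E ≃ₛₗᵢ[starRingEnd ℂ] E') (cB : F ≃ₛₗᵢ[starRingEnd ℂ] F')
    (T S : E →L[ℂ] F) : opBar cA cB (T - S) = opBar cA cB T - opBar cA cB S := by
  ext x; simp

lemma opBar_one (cA : E ≃ₛₗᵢ[starRingEnd ℂ] E') :
    opBar cA cA (1 : E →L[ℂ] E) = 1 := by
  ext x; simp

lemma opBar_comp (cA : E ≃ₛₗᵢ[starRingEnd ℂ] E') (cB : F ≃ₛₗᵢ[starRingEnd ℂ] F')
    (cC : G ≃ₛₗᵢ[starRingEnd ℂ] G') (T : F →L[ℂ] G) (S : E →L[ℂ] F) :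
    opBar cA cC (T ∘L S) = (opBar cB cC T) ∘L (opBar cA cB S) := by
  ext x; simp

lemma opBar_invol₁ (cA : E ≃ₛₗᵢ[starRingEnd ℂ] E') (cB : F ≃ₛₗᵢ[starRingEnd ℂ] F')
    (T : E →L[ℂ] F) : opBar cA.symm cB.symm (opBar cA cB T) = T := by
  ext x; simp

lemma opBar_invol₄ (cA : E' ≃ₛₗᵢ[starRingEnd ℂ] E) (cB : F ≃ₛₗᵢ[starRingEnd ℂ] F')
    (T : E →L[ℂ] F) : opBar cA cB.symm (opBar cA.symm cB T) = T := by
  ext x; simp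

lemma adjoint_opBar [CompleteSpace E] [CompleteSpace E'] [CompleteSpace F] [CompleteSpace F']
    (cA : E ≃ₛₗᵢ[starRingEnd ℂ] E') (cB : F ≃ₛₗᵢ[starRingEnd ℂ] F') (T : E →L[ℂ] F) :
    adjoint (opBar cA cB T) = opBar cB cA (adjoint T) := by
  symm
  rw [eq_adjoint_iff]
  intro x y
  rw [opBar_apply, opBar_apply, conj_inner_left, adjoint_inner_right]
  rw [← inner_conj_symm, conj_inner_left, inner_conj_symm]
  simp

lemma adjoint_add'' [CompleteSpace E] [CompleteSpace F] (X Y : E →L[ℂ] F) :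
    adjoint (X + Y) = adjoint X + adjoint Y :=
  map_add (ContinuousLinearMap.adjoint) X Y

lemma one_comp' (Z : E →L[ℂ] F) : (1 : F →L[ℂ] F) ∘L Z = Z := by
  rw [ContinuousLinearMap.one_def, ContinuousLinearMap.id_comp]

lemma comp_one' (Z : E →L[ℂ] F) : Z ∘L (1 : E →L[ℂ] E) = Z := by
  rw [ContinuousLinearMap.one_def, ContinuousLinearMap.comp_id]

lemma inner_self_re (x : E) : (⟪x, x⟫_ℂ).re = ‖x‖ ^ 2 := by
  have := inner_self_eq_norm_sq (𝕜 := ℂ) x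
  simpa using this

-- Hilbert–Schmidt theory
lemma summable_inner_sq (b : HilbertBasis ℕ ℂ E) (x : E) :
    Summable fun i => ‖⟪b i, x⟫_ℂ‖ ^ 2 := by
  have h := b.summable_inner_mul_inner x x
  have he : (fun i => ⟪x, b i⟫_ℂ * ⟪b i, x⟫_ℂ) = fun i => ((‖⟪b i, x⟫_ℂ‖ ^ 2 : ℝ) : ℂ) := by
    funext i
    rw [← inner_conj_symm, RCLike.conj_mul]
    norm_cast
  rw [he] at h
  exact Complex.summable_ofReal.mp h

lemma tsum_inner_sq (b : HilbertBasis ℕ ℂ E) (x : E) :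
    ∑' i, ‖⟪b i, x⟫_ℂ‖ ^ 2 = ‖x‖ ^ 2 := by
  have h := b.tsum_inner_mul_inner x x
  have he : (fun i => ⟪x, b i⟫_ℂ * ⟪b i, x⟫_ℂ) = fun i => ((‖⟪b i, x⟫_ℂ‖ ^ 2 : ℝ) : ℂ) := by
    funext i
    rw [← inner_conj_symm, RCLike.conj_mul]
    norm_cast
  rw [he, ← Complex.ofReal_tsum, inner_self_eq_norm_sq_to_K] at h
  exact Complex.ofReal_inj.mp (by rw [h]; norm_cast)

lemma conjBasis_on [CompleteSpace E'] (c : E ≃ₛₗᵢ[starRingEnd ℂ] E') (b : HilbertBasis ℕ ℂ E) :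
    Orthonormal ℂ (fun i => c (b i)) := by
  rw [orthonormal_iff_ite]
  intro i j
  rw [conj_inner_map]
  have := b.orthonormal
  rw [orthonormal_iff_ite] at this
  rw [this i j]
  split <;> simp

lemma conjBasis_bot [CompleteSpace E'] (c : E ≃ₛₗᵢ[starRingEnd ℂ] E') (b : HilbertBasis ℕ ℂ E) :
    (Submodule.span ℂ (Set.range (fun i => c (b i))))ᗮ = ⊥ := by
  rw [Submodule.eq_bot_iff]
  intro x hx
  have hz : ∀ i, ⟪b i, c.symm x⟫_ℂ = 0 := by
    intro i
    have h1 : ⟪c (b i), x⟫_ℂ = 0 :=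
      (Submodule.mem_orthogonal _ x).1 hx _ (Submodule.subset_span (Set.mem_range_self i))
    rw [conj_inner_left] at h1
    rw [← inner_conj_symm, h1, map_zero]
  have h0 : c.symm x = 0 := by
    have hr : b.repr (c.symm x) = 0 := by
      ext i
      rw [b.repr_apply_apply, hz i]
      rfl
    have := congrArg b.repr.symm hr
    simpa using this
  have := congrArg c h0
  simpa using this

/-- Transfer a Hilbert basis along a conjugate-linear isometric equivalence. -/
def conjBasis [CompleteSpace E'] (c : E ≃ₛₗᵢ[starRingEnd ℂ] E') (b : HilbertBasis ℕ ℂ E) :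
    HilbertBasis ℕ ℂ E' :=
  HilbertBasis.mkOfOrthogonalEqBot (conjBasis_on c b) (conjBasis_bot c b)

lemma summable_adjoint [CompleteSpace E] [CompleteSpace F] (bE : HilbertBasis ℕ ℂ E)
    (bF : HilbertBasis ℕ ℂ F) (T : E →L[ℂ] F)
    (hT : Summable fun i => ‖T (bE i)‖ ^ 2) :
    Summable fun j => ‖adjoint T (bF j)‖ ^ 2 := by
  set f : ℕ × ℕ → ℝ := fun p => ‖⟪bF p.2, T (bE p.1)⟫_ℂ‖ ^ 2 with hf
  have hf0 : 0 ≤ f := fun p => by positivity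
  have hsf : Summable f := by
    rw [summable_prod_of_nonneg hf0]
    constructor
    · intro i; exact summable_inner_sq bF (T (bE i))
    · apply hT.congr
      intro i
      exact (tsum_inner_sq bF (T (bE i))).symm
  have hswap : Summable fun p : ℕ × ℕ => f (p.2, p.1) := by
    have := ((Equiv.prodComm ℕ ℕ).summable_iff (f := f)).mpr hsf
    exact this
  have h2 := (summable_prod_of_nonneg (fun p => hf0 (p.2, p.1))).1 hswap |>.2
  apply h2.congr
  intro j
  have : ∀ i, f (i, j) = ‖⟪bE i, adjoint T (bF j)⟫_ℂ‖ ^ 2 := by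
    intro i
    rw [hf]
    simp only
    rw [← adjoint_inner_left, norm_inner_symm]
  simp only [this]
  exact tsum_inner_sq bE (adjoint T (bF j))

lemma IsHS.add {T S : E →L[ℂ] F} (hT : IsHS T) (hS : IsHS S) : IsHS (T + S) := by
  intro b
  refine Summable.of_nonneg_of_le (fun i => by positivity) ?_
    ((((hT b).mul_left 2).add ((hS b).mul_left 2)))
  intro i
  have h := norm_add_le (T (b i)) (S (b i))
  have h2 : ‖(T + S) (b i)‖ = ‖T (b i) + S (b i)‖ := by rw [ContinuousLinearMap.add_apply]
  rw [h2]
  have h3 := pow_le_pow_left₀ (norm_nonneg _) h 2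
  nlinarith [sq_nonneg (‖T (b i)‖ - ‖S (b i)‖)]

lemma IsHS.comp_left {T : E →L[ℂ] F} (hT : IsHS T) (A : F →L[ℂ] G) : IsHS (A ∘L T) := by
  intro b
  refine Summable.of_nonneg_of_le (fun i => by positivity) ?_ ((hT b).mul_left (‖A‖ ^ 2))
  intro i
  have h := A.le_opNorm (T (b i))
  have h2 : ‖(A ∘L T) (b i)‖ = ‖A (T (b i))‖ := by rw [ContinuousLinearMap.comp_apply]
  rw [h2]
  have h3 := pow_le_pow_left₀ (norm_nonneg _) h 2
  rw [mul_pow] at h3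
  exact h3

-- unit machinery
lemma le_of_sq_le_sq' {a b : ℝ} (ha : 0 ≤ a) (hb : 0 ≤ b) (h : a ^ 2 ≤ b ^ 2) : a ≤ b := by
  nlinarith

lemma isUnit_of_bddBelow [CompleteSpace E] (B : E →L[ℂ] E) {ε : ℝ} (hε : 0 < ε)
    (h1 : ∀ u, ε * ‖u‖ ≤ ‖B u‖) (h2 : ∀ u, ε * ‖u‖ ≤ ‖adjoint B u‖) : IsUnit B := by
  have hinj : LinearMap.ker (B : E →ₗ[ℂ] E) = ⊥ := by
    rw [LinearMap.ker_eq_bot']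
    intro u hu
    have h := h1 u
    rw [show B u = 0 from hu, norm_zero] at h
    have hn : ‖u‖ = 0 := le_antisymm (by nlinarith) (norm_nonneg u)
    exact norm_eq_zero.mp hn
  have hanti : AntilipschitzWith (⟨ε⁻¹, by positivity⟩ : NNReal) B := by
    apply ContinuousLinearMap.antilipschitz_of_bound
    intro x
    show ‖x‖ ≤ ε⁻¹ * ‖B x‖
    calc ‖x‖ = ε⁻¹ * (ε * ‖x‖) := by field_simp
    _ ≤ ε⁻¹ * ‖B x‖ := mul_le_mul_of_nonneg_left (h1 x) (by positivity)
  have hclosed : IsClosed ((LinearMap.range (B : E →ₗ[ℂ] E) : Submodule ℂ E) : Set E) := by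
    rw [LinearMap.coe_range]
    exact hanti.isClosed_range B.uniformContinuous
  have : CompleteSpace (LinearMap.range (B : E →ₗ[ℂ] E) : Submodule ℂ E) := hclosed.completeSpace_coe
  have hrange : LinearMap.range (B : E →ₗ[ℂ] E) = ⊤ := by
    rw [← Submodule.orthogonal_eq_bot_iff, Submodule.eq_bot_iff]
    intro x hx
    have hax : adjoint B x = 0 := by
      apply ext_inner_left ℂ
      intro v
      rw [adjoint_inner_right, inner_zero_right]
      exact ((Submodule.mem_orthogonal _ x).1 hx _ (LinearMap.mem_range_self (B : E →ₗ[ℂ] E) v)).symm ▸ rfl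
    have h := h2 x
    rw [hax, norm_zero] at h
    have hn : ‖x‖ = 0 := le_antisymm (by nlinarith) (norm_nonneg x)
    exact norm_eq_zero.mp hn
  let e := ContinuousLinearEquiv.ofBijective B hinj hrange
  refine ⟨⟨B, e.symm.toContinuousLinearMap, ?_, ?_⟩, rfl⟩
  · ext u
    simp only [ContinuousLinearMap.mul_apply, ContinuousLinearMap.one_apply,
      ContinuousLinearEquiv.coe_coe]
    have : B (e.symm u) = e (e.symm u) := rfl
    rw [this, e.apply_symm_apply]
  · ext u
    simp only [ContinuousLinearMap.mul_apply, ContinuousLinearMap.one_apply,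
      ContinuousLinearEquiv.coe_coe]
    have : B u = e u := rfl
    rw [this, e.symm_apply_apply]

end AuxConj

lemma IsHS.comp_right {Hp Hm : Type} [NormedAddCommGroup Hp] [InnerProductSpace ℂ Hp]
    [CompleteSpace Hp] [NormedAddCommGroup Hm] [InnerProductSpace ℂ Hm] [CompleteSpace Hm]
    (c : Hp ≃ₛₗᵢ[starRingEnd ℂ] Hm) {T : Hm →L[ℂ] Hp} (hT : IsHS T) (A : Hm →L[ℂ] Hm) :
    IsHS (T ∘L A) := by
  intro b
  have bF : HilbertBasis ℕ ℂ Hp := conjBasis c.symm b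
  have h1 : Summable fun j => ‖adjoint T (bF j)‖ ^ 2 := summable_adjoint b bF T (hT b)
  have h2 : Summable fun j => ‖adjoint (T ∘L A) (bF j)‖ ^ 2 := by
    refine Summable.of_nonneg_of_le (fun i => by positivity) ?_ (h1.mul_left (‖A‖ ^ 2))
    intro j
    rw [adjoint_comp]
    have hnA : ‖adjoint A‖ = ‖A‖ := (ContinuousLinearMap.adjoint (E := Hm) (F := Hm)).norm_map A
    have h3 : ‖(adjoint A ∘L adjoint T) (bF j)‖ ≤ ‖A‖ * ‖adjoint T (bF j)‖ := by
      rw [ContinuousLinearMap.comp_apply]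
      have := (adjoint A).le_opNorm (adjoint T (bF j))
      rwa [hnA] at this
    have h4 := pow_le_pow_left₀ (norm_nonneg _) h3 2
    rw [mul_pow] at h4
    exact h4
  have h5 := summable_adjoint bF b (adjoint (T ∘L A)) h2
  apply h5.congr
  intro i
  rw [adjoint_adjoint]

section Symp
variable (c : Hp ≃ₛₗᵢ[starRingEnd ℂ] Hm)



lemma barBarM (h : Hm →L[ℂ] Hp) : opBar c c.symm (barM c h) = h := opBar_invol₄ c c h

lemma barBarP (g : Hp →L[ℂ] Hp) : opBar c.symm c.symm (barP c g) = g := opBar_invol₁ c c g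

lemma barM_of_trans (h : Hm →L[ℂ] Hp) : opBar c.symm c (opTrans c h) = adjoint h := by
  rw [opTrans, ← adjoint_opBar, opBar_invol₄ c c h]

-- barred relations
variable {g : Hp →L[ℂ] Hp} {h : Hm →L[ℂ] Hp}

lemma rel1b (hs : SympBlocks c g h) :
    adjoint (barP c g) ∘L barP c g = 1 + adjoint h ∘L h := by
  have h0 := congrArg (opBar c c) (sub_eq_iff_eq_add.mp hs.1)
  rw [opBar_comp c c c, opBar_add, opBar_one, opBar_comp c c.symm c,
    barM_of_trans, ← adjoint_opBar] at h0
  have h1 : opBar c c.symm (barM c h) = h := barBarM c h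
  rw [h1] at h0
  exact h0

lemma rel3b (hs : SympBlocks c g h) :
    barP c g ∘L adjoint (barP c g) = 1 + barM c h ∘L adjoint (barM c h) := by
  have h0 := congrArg (opBar c c) (sub_eq_iff_eq_add.mp hs.2.2.1)
  rw [opBar_comp c c c, opBar_add, opBar_one, opBar_comp c c.symm c,
    ← adjoint_opBar, ← adjoint_opBar] at h0
  exact h0

lemma rel2b (hs : SympBlocks c g h) :
    adjoint (barP c g) ∘L barM c h = adjoint h ∘L g := by
  have h0 := congrArg (opBar c.symm c) hs.2.1
  rw [opBar_comp c.symm c c, opBar_comp c.symm c.symm c, barM_of_trans,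
    barBarP, ← adjoint_opBar] at h0
  exact h0


lemma siegel_norm_le {Z : Hm →L[ℂ] Hp}
    (hpos : ∀ u : Hm, u ≠ 0 → 0 < ⟪u, (1 - (adjoint Z) ∘L Z) u⟫_ℂ) (u : Hm) : ‖Z u‖ ≤ ‖u‖ := by
  by_cases h0 : u = 0
  · simp [h0]
  · have h := hpos u h0
    have he : (1 - (adjoint Z) ∘L Z) u = u - adjoint Z (Z u) := by
      simp [ContinuousLinearMap.sub_apply]
    rw [he, inner_sub_right, adjoint_inner_right] at h
    rw [Complex.lt_def] at h
    have hre := h.1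
    simp only [Complex.zero_re, Complex.sub_re, inner_self_re] at hre
    apply le_of_sq_le_sq' (norm_nonneg _) (norm_nonneg _)
    linarith


set_option maxHeartbeats 1000000 in
lemma symp_unit {Z : Hm →L[ℂ] Hp} (hs : SympBlocks c g h)
    (hpos : ∀ u : Hm, u ≠ 0 → 0 < ⟪u, (1 - (adjoint Z) ∘L Z) u⟫_ℂ) :
    IsUnit (barM c h ∘L Z + barP c g) := by
  rcases subsingleton_or_nontrivial Hm with hsub | hnt
  · have h1 : (barM c h ∘L Z + barP c g) = 1 := by
      ext u; exact Subsingleton.elim _ _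
    rw [h1]; exact isUnit_one
  -- bounded below estimates for G := barP c g
  have r1 := rel1b c hs
  have r3 := rel3b c hs
  have hGlow : ∀ u : Hm, ‖u‖ ≤ ‖barP c g u‖ := by
    intro u
    have e0 : adjoint (barP c g) ((barP c g) u) = u + adjoint h (h u) := by
      have : adjoint (barP c g) ((barP c g) u) = (adjoint (barP c g) ∘L barP c g) u := rfl
      rw [this, r1]; simp
    have e1 : ⟪barP c g u, barP c g u⟫_ℂ = ⟪u, u⟫_ℂ + ⟪h u, h u⟫_ℂ := by
      rw [← adjoint_inner_right, e0, inner_add_right, adjoint_inner_right]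
    have e2 := congrArg Complex.re e1
    simp only [Complex.add_re, inner_self_re] at e2
    apply le_of_sq_le_sq' (norm_nonneg _) (norm_nonneg _)
    nlinarith [sq_nonneg ‖h u‖]
  have hGlow' : ∀ u : Hm, ‖u‖ ≤ ‖adjoint (barP c g) u‖ := by
    intro u
    have e0 : (barP c g) (adjoint (barP c g) u) = u + barM c h (adjoint (barM c h) u) := by
      have : (barP c g) (adjoint (barP c g) u) = (barP c g ∘L adjoint (barP c g)) u := rfl
      rw [this, r3]; simp
    have e1 : ⟪adjoint (barP c g) u, adjoint (barP c g) u⟫_ℂ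
        = ⟪u, u⟫_ℂ + ⟪adjoint (barM c h) u, adjoint (barM c h) u⟫_ℂ := by
      rw [adjoint_inner_left, e0, inner_add_right, ← adjoint_inner_left]
    have e2 := congrArg Complex.re e1
    simp only [Complex.add_re, inner_self_re] at e2
    apply le_of_sq_le_sq' (norm_nonneg _) (norm_nonneg _)
    nlinarith [sq_nonneg ‖adjoint (barM c h) u‖]
  have hGunit : IsUnit (barP c g) :=
    isUnit_of_bddBelow _ one_pos (fun u => by simpa using hGlow u)
      (fun u => by simpa using hGlow' u)
  obtain ⟨Gu, hGu⟩ := hGunit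
  have hG0 : (0 : ℝ) < 1 := one_pos
  have hG1 : 1 ≤ ‖barP c g‖ := by
    obtain ⟨u0, hu0⟩ := exists_ne (0 : Hm)
    have h1 := hGlow u0
    have h2 := (barP c g).le_opNorm u0
    have h3 : 0 < ‖u0‖ := norm_pos_iff.mpr hu0
    nlinarith
  have hGpos : (0:ℝ) < ‖barP c g‖ := by linarith
  have hZle := siegel_norm_le hpos
  have hZnorm : ‖Z‖ ≤ 1 := Z.opNorm_le_bound zero_le_one (fun u => by simpa using hZle u)
  set K : Hp →L[ℂ] Hm := (↑Gu⁻¹ : Hm →L[ℂ] Hm) ∘L barM c h with hK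
  have hGinv1 : (↑Gu⁻¹ : Hm →L[ℂ] Hm) ∘L barP c g = 1 := by
    rw [← hGu, ← ContinuousLinearMap.mul_def, Units.inv_mul]
  have hGinv2 : barP c g ∘L (↑Gu⁻¹ : Hm →L[ℂ] Hm) = 1 := by
    rw [← hGu, ← ContinuousLinearMap.mul_def, Units.mul_inv]
  set r : ℝ := Real.sqrt (1 - (‖barP c g‖)⁻¹ ^ 2) with hr
  have hGinvle : (‖barP c g‖)⁻¹ ≤ 1 := by
    rw [inv_le_one_iff₀]; right; exact hG1
  have hGinvpos : 0 < (‖barP c g‖)⁻¹ := by positivity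
  have harg0 : (0:ℝ) ≤ 1 - (‖barP c g‖)⁻¹ ^ 2 := by nlinarith
  have hKadj : ∀ v : Hm, ‖adjoint K v‖ ^ 2 ≤ (1 - (‖barP c g‖)⁻¹ ^ 2) * ‖v‖ ^ 2 := by
    intro v
    set w := adjoint (↑Gu⁻¹ : Hm →L[ℂ] Hm) v with hw
    have hGw : adjoint (barP c g) w = v := by
      have h1 : adjoint (barP c g) w
          = adjoint ((↑Gu⁻¹ : Hm →L[ℂ] Hm) ∘L barP c g) v := by
        rw [adjoint_comp]; rfl
      rw [h1, hGinv1, ContinuousLinearMap.one_def, adjoint_id]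
      rfl
    have hKv : adjoint K v = adjoint (barM c h) w := by
      rw [hK, adjoint_comp]; rfl
    have e1 : ⟪adjoint (barM c h) w, adjoint (barM c h) w⟫_ℂ = ⟪v, v⟫_ℂ - ⟪w, w⟫_ℂ := by
      have hHb : barM c h ∘L adjoint (barM c h) = barP c g ∘L adjoint (barP c g) - 1 := by
        rw [r3]; abel
      calc ⟪adjoint (barM c h) w, adjoint (barM c h) w⟫_ℂ
          = ⟪w, (barM c h ∘L adjoint (barM c h)) w⟫_ℂ := by
            rw [ContinuousLinearMap.comp_apply, adjoint_inner_left]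
        _ = ⟪w, (barP c g ∘L adjoint (barP c g)) w⟫_ℂ - ⟪w, w⟫_ℂ := by
            rw [hHb]; simp [ContinuousLinearMap.sub_apply, inner_sub_right]
        _ = ⟪adjoint (barP c g) w, adjoint (barP c g) w⟫_ℂ - ⟪w, w⟫_ℂ := by
            rw [ContinuousLinearMap.comp_apply, ← adjoint_inner_left]
        _ = ⟪v, v⟫_ℂ - ⟪w, w⟫_ℂ := by rw [hGw]
    have e2 := congrArg Complex.re e1
    simp only [Complex.sub_re, inner_self_re] at e2
    rw [hKv]
    have h2 : ‖v‖ ≤ ‖barP c g‖ * ‖w‖ := by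
      conv_lhs => rw [← hGw]
      have h5 := (adjoint (barP c g)).le_opNorm w
      have hn : ‖adjoint (barP c g)‖ = ‖barP c g‖ :=
        (ContinuousLinearMap.adjoint (E := Hm) (F := Hm)).norm_map _
      rwa [hn] at h5
    have h3 : (‖barP c g‖)⁻¹ * ‖v‖ ≤ ‖w‖ := by
      rw [inv_mul_le_iff₀ hGpos]
      exact h2
    have h4 := pow_le_pow_left₀ (by positivity) h3 2
    rw [mul_pow] at h4
    nlinarith [e2, h4]
  have hKnorm : ‖K‖ ≤ r := by
    have hadj : ‖K‖ = ‖adjoint K‖ :=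
      ((ContinuousLinearMap.adjoint (E := Hp) (F := Hm)).norm_map K).symm
    rw [hadj]
    apply opNorm_le_bound _ (Real.sqrt_nonneg _)
    intro v
    apply le_of_sq_le_sq' (norm_nonneg _) (by positivity)
    rw [mul_pow, Real.sq_sqrt harg0]
    exact hKadj v
  have hrlt : r < 1 := by
    rw [hr]
    calc Real.sqrt (1 - (‖barP c g‖)⁻¹ ^ 2) < Real.sqrt 1 :=
          Real.sqrt_lt_sqrt harg0 (by nlinarith)
      _ = 1 := Real.sqrt_one
  have hKZ : ‖-(K ∘L Z)‖ < 1 := by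
    rw [norm_neg]
    have h1 := opNorm_comp_le K Z
    have h2 : ‖K‖ * ‖Z‖ ≤ ‖K‖ * 1 := mul_le_mul_of_nonneg_left hZnorm (norm_nonneg K)
    calc ‖K ∘L Z‖ ≤ ‖K‖ * ‖Z‖ := h1
      _ ≤ ‖K‖ := by linarith
      _ ≤ r := hKnorm
      _ < 1 := hrlt
  set U1 := Units.oneSub (-(K ∘L Z)) hKZ with hU1
  have hval : ((Gu * U1 : (Hm →L[ℂ] Hm)ˣ) : Hm →L[ℂ] Hm) = barM c h ∘L Z + barP c g := by
    have hU1v : (U1 : Hm →L[ℂ] Hm) = 1 + K ∘L Z := by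
      rw [hU1, Units.val_oneSub, sub_neg_eq_add]
    have hGK : barP c g ∘L (K ∘L Z) = barM c h ∘L Z := by
      rw [hK, ContinuousLinearMap.comp_assoc, ← ContinuousLinearMap.comp_assoc (barP c g),
        hGinv2]
      simp [ContinuousLinearMap.one_def]
    rw [Units.val_mul, hGu, hU1v, ContinuousLinearMap.mul_def, comp_add, hGK,
      ContinuousLinearMap.one_def, ContinuousLinearMap.comp_id]
    exact add_comm _ _
  exact hval ▸ (Gu * U1).isUnit


set_option maxHeartbeats 1000000 in
lemma symp_AtB {Z : Hm →L[ℂ] Hp} (hs : SympBlocks c g h) (hZt : opTrans c Z = Z) :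
    adjoint (opBar c.symm c (g ∘L Z + h)) ∘L (barM c h ∘L Z + barP c g)
      = adjoint (opBar c.symm c.symm (barM c h ∘L Z + barP c g)) ∘L (g ∘L Z + h) := by
  have hZt' : adjoint (opBar c.symm c Z) = Z := hZt
  have e1 : adjoint g ∘L g = 1 + adjoint (barM c h) ∘L barM c h := sub_eq_iff_eq_add.mp hs.1
  have e2 : adjoint g ∘L h = adjoint (barM c h) ∘L barP c g := hs.2.1
  have r1 := rel1b c hs
  have r2 := rel2b c hs
  have hbp : opBar c c g = barP c g := rfl
  have hbm : opBar c.symm c h = barM c h := rfl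
  have hAt : adjoint (opBar c.symm c (g ∘L Z + h))
      = Z ∘L adjoint (barP c g) + adjoint (barM c h) := by
    rw [opBar_add c.symm c, opBar_comp c.symm c c, adjoint_add'', adjoint_comp, hZt', hbp, hbm]
  have hBt : adjoint (opBar c.symm c.symm (barM c h ∘L Z + barP c g))
      = Z ∘L adjoint h + adjoint g := by
    rw [opBar_add c.symm c.symm, opBar_comp c.symm c c.symm, barBarM, barBarP,
      adjoint_add'', adjoint_comp, hZt']
  rw [hAt, hBt]
  have e1' : adjoint (barM c h) ∘L barM c h = adjoint g ∘L g - 1 := by rw [e1]; abel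
  have ta : (Z ∘L adjoint (barP c g)) ∘L (barM c h ∘L Z)
      = (Z ∘L adjoint h) ∘L (g ∘L Z) := by
    rw [comp_assoc, ← comp_assoc (adjoint (barP c g)), r2, comp_assoc, ← comp_assoc]
  have tb : (Z ∘L adjoint (barP c g)) ∘L barP c g
      = Z + (Z ∘L adjoint h) ∘L h := by
    rw [comp_assoc, r1, comp_add, comp_one', ← comp_assoc]
  have tc : adjoint (barM c h) ∘L (barM c h ∘L Z)
      = adjoint g ∘L (g ∘L Z) - Z := by
    rw [← comp_assoc, e1', sub_comp, one_comp', comp_assoc]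
  have td : adjoint (barM c h) ∘L barP c g = adjoint g ∘L h := e2.symm
  simp only [add_comp, comp_add]
  rw [ta, tb, tc, td]
  abel

set_option maxHeartbeats 1000000 in
lemma symp_BBAA {Z : Hm →L[ℂ] Hp} (hs : SympBlocks c g h) :
    adjoint (barM c h ∘L Z + barP c g) ∘L (barM c h ∘L Z + barP c g)
      - adjoint (g ∘L Z + h) ∘L (g ∘L Z + h) = 1 - adjoint Z ∘L Z := by
  have e1 : adjoint g ∘L g = 1 + adjoint (barM c h) ∘L barM c h := sub_eq_iff_eq_add.mp hs.1
  have e2 : adjoint g ∘L h = adjoint (barM c h) ∘L barP c g := hs.2.1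
  have r1 := rel1b c hs
  have r2 := rel2b c hs
  rw [adjoint_add'', adjoint_add'', adjoint_comp, adjoint_comp]
  have t1 : (adjoint Z ∘L adjoint (barM c h)) ∘L (barM c h ∘L Z)
      = (adjoint Z ∘L adjoint g) ∘L (g ∘L Z) - adjoint Z ∘L Z := by
    rw [comp_assoc, ← comp_assoc (adjoint (barM c h)),
      show adjoint (barM c h) ∘L barM c h = adjoint g ∘L g - 1 from by rw [e1]; abel,
      sub_comp, one_comp', comp_sub, comp_assoc, ← comp_assoc (adjoint Z) (adjoint g)]
  have t2 : (adjoint Z ∘L adjoint (barM c h)) ∘L barP c g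
      = adjoint Z ∘L (adjoint g ∘L h) := by
    rw [comp_assoc, ← e2]
  have t3 : adjoint (barP c g) ∘L (barM c h ∘L Z)
      = (adjoint h ∘L g) ∘L Z := by
    rw [← comp_assoc, r2]
  have t4 : adjoint (barP c g) ∘L barP c g = 1 + adjoint h ∘L h := r1
  simp only [add_comp, comp_add]
  rw [t1, t2, t3, t4]
  have t7 : (adjoint h ∘L g) ∘L Z = adjoint h ∘L (g ∘L Z) := by rw [comp_assoc]
  have t9 : (adjoint Z ∘L adjoint g) ∘L h = adjoint Z ∘L (adjoint g ∘L h) := by rw [comp_assoc]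
  rw [t7, t9]
  abel

set_option maxHeartbeats 1000000 in
lemma symp_mem {Z : Hm →L[ℂ] Hp} (hs : SympBlocks c g h) (hh : IsHS h) (hZ : InDres c Z) :
    InDres c (rho c g h Z) := by
  obtain ⟨hZhs, hZt, hZpos⟩ := hZ
  rcases subsingleton_or_nontrivial Hm with hsub | hnt
  · have hsp : Subsingleton Hp := c.symm.surjective.subsingleton
    refine ⟨?_, ?_, ?_⟩
    · intro b
      have hz : ∀ i : ℕ, ‖rho c g h Z (b i)‖ ^ 2 = (0 : ℝ) := by
        intro i
        rw [Subsingleton.elim (rho c g h Z (b i)) 0, norm_zero]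
        norm_num
      exact summable_zero.congr (fun i => (hz i).symm)
    · ext u
      exact Subsingleton.elim _ _
    · intro u hu
      exact absurd (Subsingleton.elim u 0) hu
  · obtain ⟨Bu, hBu⟩ := symp_unit c hs hZpos
    have hinv : Ring.inverse (barM c h ∘L Z + barP c g) = (↑Bu⁻¹ : Hm →L[ℂ] Hm) := by
      rw [← hBu, Ring.inverse_unit]
    have hW : rho c g h Z = (g ∘L Z + h) ∘L (↑Bu⁻¹ : Hm →L[ℂ] Hm) := by
      rw [rho, hinv]
    have hBuinv1 : (barM c h ∘L Z + barP c g) ∘L (↑Bu⁻¹ : Hm →L[ℂ] Hm) = 1 := by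
      rw [← hBu, ← ContinuousLinearMap.mul_def, Units.mul_inv]
    have hBuinv2 : (↑Bu⁻¹ : Hm →L[ℂ] Hm) ∘L (barM c h ∘L Z + barP c g) = 1 := by
      rw [← hBu, ← ContinuousLinearMap.mul_def, Units.inv_mul]
    refine ⟨?_, ?_, ?_⟩
    · -- Hilbert–Schmidt
      rw [hW, add_comp, comp_assoc]
      exact IsHS.add ((IsHS.comp_right c hZhs _).comp_left g) (IsHS.comp_right c hh _)
    · -- symmetry
      have hid := symp_AtB c hs hZt
      have hTW : opTrans c (rho c g h Z)
          = adjoint (opBar c.symm c.symm (↑Bu⁻¹ : Hm →L[ℂ] Hm))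
              ∘L adjoint (opBar c.symm c (g ∘L Z + h)) := by
        have hbarW : opBar c.symm c (rho c g h Z)
            = opBar c.symm c (g ∘L Z + h) ∘L opBar c.symm c.symm (↑Bu⁻¹ : Hm →L[ℂ] Hm) := by
          rw [hW, opBar_comp c.symm c.symm c]
        rw [opTrans, hbarW, adjoint_comp]
      have hbar1 : (1 : Hp →L[ℂ] Hp)
          = opBar c.symm c.symm (barM c h ∘L Z + barP c g)
            ∘L opBar c.symm c.symm (↑Bu⁻¹ : Hm →L[ℂ] Hm) := by
        rw [← opBar_comp c.symm c.symm c.symm, hBuinv1, opBar_one]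
      have hTWB : opTrans c (rho c g h Z) ∘L (barM c h ∘L Z + barP c g) = g ∘L Z + h := by
        rw [hTW, comp_assoc, hid, ← comp_assoc, ← adjoint_comp, ← hbar1,
          ContinuousLinearMap.one_def, adjoint_id, ContinuousLinearMap.id_comp]
      have hfin : opTrans c (rho c g h Z)
          = (opTrans c (rho c g h Z) ∘L (barM c h ∘L Z + barP c g)) ∘L (↑Bu⁻¹ : Hm →L[ℂ] Hm) := by
        rw [comp_assoc, hBuinv1, comp_one']
      rw [hfin, hTWB, ← hW]
    · -- positivity
      intro u hu
      set v := (↑Bu⁻¹ : Hm →L[ℂ] Hm) u with hv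
      have hBv : (barM c h ∘L Z + barP c g) v = u := by
        rw [hv, ← ContinuousLinearMap.comp_apply, hBuinv1, ContinuousLinearMap.one_apply]
      have hvne : v ≠ 0 := by
        intro h0
        apply hu
        rw [← hBv, h0, map_zero]
      have hWu : rho c g h Z u = (g ∘L Z + h) v := by
        rw [hW, ContinuousLinearMap.comp_apply]
      have expand : ∀ (W : Hm →L[ℂ] Hp) (x : Hm), ⟪x, ((1 : Hm →L[ℂ] Hm) - adjoint W ∘L W) x⟫_ℂ
          = ⟪x, x⟫_ℂ - ⟪W x, W x⟫_ℂ := by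
        intro W x
        rw [ContinuousLinearMap.sub_apply, inner_sub_right, ContinuousLinearMap.one_apply,
          ContinuousLinearMap.comp_apply, adjoint_inner_right]
      have hkey : ⟪u, ((1 : Hm →L[ℂ] Hm) - adjoint (rho c g h Z) ∘L rho c g h Z) u⟫_ℂ
          = ⟪v, ((1 : Hm →L[ℂ] Hm) - adjoint Z ∘L Z) v⟫_ℂ := by
        rw [expand (rho c g h Z) u, hWu, ← hBv]
        have h1 : ⟪(barM c h ∘L Z + barP c g) v, (barM c h ∘L Z + barP c g) v⟫_ℂ
            = ⟪v, (adjoint (barM c h ∘L Z + barP c g) ∘L (barM c h ∘L Z + barP c g)) v⟫_ℂ := by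
          rw [ContinuousLinearMap.comp_apply, adjoint_inner_right]
        have h2 : ⟪(g ∘L Z + h) v, (g ∘L Z + h) v⟫_ℂ
            = ⟪v, (adjoint (g ∘L Z + h) ∘L (g ∘L Z + h)) v⟫_ℂ := by
          rw [ContinuousLinearMap.comp_apply, adjoint_inner_right]
        rw [h1, h2, ← inner_sub_right, ← ContinuousLinearMap.sub_apply, symp_BBAA c hs]
      rw [hkey]
      exact hZpos v hvne

end Symp

/-- `ρ((g,h;h̄,ḡ), Z) = (gZ + h)(h̄Z + ḡ)⁻¹` defines an action of
`Sp_res(V,Ω)` on the restricted Siegel disc: the image of any `Z ∈ D_res(H)` is again in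
`D_res(H)` (Hilbert–Schmidt, symmetric, `id − W*W ≻ 0`), and the action axioms hold. -/
theorem statement12 (c : Hp ≃ₛₗᵢ[starRingEnd ℂ] Hm) :
    (∀ Z : Hm →L[ℂ] Hp, InDres c Z → rho c 1 0 Z = Z) ∧
    (∀ (g : Hp →L[ℂ] Hp) (h : Hm →L[ℂ] Hp), SympBlocks c g h → IsHS h →
      ∀ Z : Hm →L[ℂ] Hp, InDres c Z → InDres c (rho c g h Z)) ∧
    (∀ (g₁ : Hp →L[ℂ] Hp) (h₁ : Hm →L[ℂ] Hp), SympBlocks c g₁ h₁ → IsHS h₁ →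
      ∀ (g₂ : Hp →L[ℂ] Hp) (h₂ : Hm →L[ℂ] Hp), SympBlocks c g₂ h₂ → IsHS h₂ →
        ∀ Z : Hm →L[ℂ] Hp, InDres c Z →
          rho c (g₁ ∘L g₂ + h₁ ∘L barM c h₂) (g₁ ∘L h₂ + h₁ ∘L barP c g₂) Z
            = rho c g₁ h₁ (rho c g₂ h₂ Z)) := by
  refine ⟨?_, ?_, ?_⟩
  · intro Z _
    have h1 : barM c (0 : Hm →L[ℂ] Hp) = 0 := by ext x; simp [barM, opBar]
    have h2 : barP c (1 : Hp →L[ℂ] Hp) = 1 := opBar_one c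
    rw [rho, h1, h2, zero_comp, zero_add, Ring.inverse_one, comp_one', one_comp', add_zero]
  · intro g h hs hh Z hZ
    exact symp_mem c hs hh hZ
  · intro g₁ h₁ hs₁ hh₁ g₂ h₂ hs₂ hh₂ Z hZ
    obtain ⟨hZhs, hZt, hZpos⟩ := hZ
    obtain ⟨B2u, hB2u⟩ := symp_unit c hs₂ hZpos
    have hmem₂ := symp_mem c hs₂ hh₂ ⟨hZhs, hZt, hZpos⟩
    obtain ⟨hW2hs, hW2t, hW2pos⟩ := hmem₂
    obtain ⟨B1u, hB1u⟩ := symp_unit c hs₁ hW2pos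
    set W₂ := rho c g₂ h₂ Z with hW₂def
    have hinv2 : Ring.inverse (barM c h₂ ∘L Z + barP c g₂) = (↑B2u⁻¹ : Hm →L[ℂ] Hm) := by
      rw [← hB2u, Ring.inverse_unit]
    have hW2 : W₂ = (g₂ ∘L Z + h₂) ∘L (↑B2u⁻¹ : Hm →L[ℂ] Hm) := by
      rw [hW₂def, rho, hinv2]
    have hW2B2 : W₂ ∘L (barM c h₂ ∘L Z + barP c g₂) = g₂ ∘L Z + h₂ := by
      rw [hW2, comp_assoc, ← hB2u, ← ContinuousLinearMap.mul_def, Units.inv_mul, comp_one']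
    have hbarh' : barM c (g₁ ∘L h₂ + h₁ ∘L barP c g₂)
        = barP c g₁ ∘L barM c h₂ + barM c h₁ ∘L g₂ := by
      show opBar c.symm c (g₁ ∘L h₂ + h₁ ∘L barP c g₂) = _
      rw [opBar_add c.symm c, opBar_comp c.symm c c g₁ h₂,
        opBar_comp c.symm c.symm c h₁ (barP c g₂), barBarP]
      rfl
    have hbarg' : barP c (g₁ ∘L g₂ + h₁ ∘L barM c h₂)
        = barP c g₁ ∘L barP c g₂ + barM c h₁ ∘L h₂ := by
      show opBar c c (g₁ ∘L g₂ + h₁ ∘L barM c h₂) = _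
      rw [opBar_add c c, opBar_comp c c c g₁ g₂,
        opBar_comp c c.symm c h₁ (barM c h₂), barBarM]
      rfl
    have hBcomp : barM c (g₁ ∘L h₂ + h₁ ∘L barP c g₂) ∘L Z + barP c (g₁ ∘L g₂ + h₁ ∘L barM c h₂)
        = (↑B1u : Hm →L[ℂ] Hm) ∘L (↑B2u : Hm →L[ℂ] Hm) := by
      rw [hbarh', hbarg', hB1u, hB2u]
      symm
      calc (barM c h₁ ∘L W₂ + barP c g₁) ∘L (barM c h₂ ∘L Z + barP c g₂)
          = barM c h₁ ∘L (W₂ ∘L (barM c h₂ ∘L Z + barP c g₂))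
            + barP c g₁ ∘L (barM c h₂ ∘L Z + barP c g₂) := by
            rw [add_comp, comp_assoc]
        _ = barM c h₁ ∘L (g₂ ∘L Z + h₂) + barP c g₁ ∘L (barM c h₂ ∘L Z + barP c g₂) := by
            rw [hW2B2]
        _ = (barP c g₁ ∘L barM c h₂ + barM c h₁ ∘L g₂) ∘L Z
            + (barP c g₁ ∘L barP c g₂ + barM c h₁ ∘L h₂) := by
            simp only [comp_add, add_comp, comp_assoc]
            abel
    have hAcomp : (g₁ ∘L g₂ + h₁ ∘L barM c h₂) ∘L Z + (g₁ ∘L h₂ + h₁ ∘L barP c g₂)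
        = (g₁ ∘L W₂ + h₁) ∘L (↑B2u : Hm →L[ℂ] Hm) := by
      rw [hB2u]
      symm
      calc (g₁ ∘L W₂ + h₁) ∘L (barM c h₂ ∘L Z + barP c g₂)
          = g₁ ∘L (W₂ ∘L (barM c h₂ ∘L Z + barP c g₂)) + h₁ ∘L (barM c h₂ ∘L Z + barP c g₂) := by
            rw [add_comp, comp_assoc]
        _ = g₁ ∘L (g₂ ∘L Z + h₂) + h₁ ∘L (barM c h₂ ∘L Z + barP c g₂) := by rw [hW2B2]
        _ = (g₁ ∘L g₂ + h₁ ∘L barM c h₂) ∘L Z + (g₁ ∘L h₂ + h₁ ∘L barP c g₂) := by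
            simp only [comp_add, add_comp, comp_assoc]
            abel
    have hinv1 : Ring.inverse (barM c h₁ ∘L W₂ + barP c g₁) = (↑B1u⁻¹ : Hm →L[ℂ] Hm) := by
      rw [← hB1u, Ring.inverse_unit]
    have hinvc : Ring.inverse (barM c (g₁ ∘L h₂ + h₁ ∘L barP c g₂) ∘L Z
          + barP c (g₁ ∘L g₂ + h₁ ∘L barM c h₂))
        = (↑B2u⁻¹ : Hm →L[ℂ] Hm) ∘L (↑B1u⁻¹ : Hm →L[ℂ] Hm) := by
      rw [hBcomp, ← ContinuousLinearMap.mul_def, ← Units.val_mul, Ring.inverse_unit,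
        mul_inv_rev, Units.val_mul, ContinuousLinearMap.mul_def]
    rw [rho, rho, hinvc, hinv1, hAcomp, comp_assoc, ← comp_assoc (↑B2u : Hm →L[ℂ] Hm),
      ← ContinuousLinearMap.mul_def (↑B2u : Hm →L[ℂ] Hm) (↑B2u⁻¹ : Hm →L[ℂ] Hm),
      Units.mul_inv, one_comp']
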